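/- Let G be a connected simple graph on n ≥ 3 vertices with average degree d_av = (Σ_{v∈V} deg v)/n. If 0 < γ < d_av/(d_av+1), then Θ_γ(G) ≥ n / (2^{H(γ)}·d_av^γ); and if d_av/(d_av+1) ≤ γ ≤ 1, then Θ_γ(G) ≥ n/(d_av+1). -/

import Mathlib

/-!
Both bounds come from the Caro–Wei inequality `α(H) ≥ N² / ∑ (deg v + 1)`.

For `γ < d/(d+1)`, apply it to `H = G(r, k)` with `k = ⌊γ r⌋`. A closed neighbourhood in `H`
consists of tuples that differ from the centre on a set `S` of at most `k` coordinates, where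
they are `G`-adjacent to it, so with `D = n d`
  `∑ (deg v + 1) ≤ ∑_{|S| ≤ k} D^|S| n^(r - |S|) = n^r ∑_{|S| ≤ k} d^|S|`.
The Chernoff bound `∑_{|S| ≤ γ r} d^|S| ≤ (2^H(γ) d^γ)^r`, valid as long as `γ ≤ (1 - γ) d`,
then gives `α(G(r, ⌊γ r⌋)) ≥ (n / (2^H(γ) d^γ))^r` for every `r`.

For larger `γ`, Caro–Wei for `G` itself gives `α(G) ≥ n² / (D + n) = n / (d + 1)`, and
products of independent sets of `G` are independent in `G(r, k)`, so
`α(G(r, k)) ≥ α(G)^r ≥ (n / (d + 1))^r`.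

In both cases a single `r ≥ 1/γ` already gives the bound on `Θ_γ(G)`.
-/

/-- The binary entropy function `H(x) = -x log₂ x - (1-x) log₂ (1-x)`. -/
noncomputable def binH (x : ℝ) : ℝ := -x * Real.logb 2 x - (1 - x) * Real.logb 2 (1 - x)

/-- The graph `G(r,k)`: vertices are `r`-tuples of vertices of `G`, and two distinct
tuples are adjacent iff they are adjacent in the `r`-th strong power of `G` (in every
coordinate they are equal or adjacent) and they differ in at most `k` coordinates.
For `k = r` this is exactly the `r`-th strong power `G(r)`. -/
def strongPow {V : Type*} [DecidableEq V] (G : SimpleGraph V) (r k : ℕ) :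
    SimpleGraph (Fin r → V) where
  Adj u v := u ≠ v ∧ (∀ i, u i = v i ∨ G.Adj (u i) (v i)) ∧
    (Finset.univ.filter fun i => u i ≠ v i).card ≤ k
  symm := ⟨by
    rintro u v ⟨h1, h2, h3⟩
    refine ⟨fun h => h1 h.symm, fun i => (h2 i).imp Eq.symm (fun h => G.adj_symm h), ?_⟩
    have he : (Finset.univ.filter fun i => v i ≠ u i)
        = (Finset.univ.filter fun i => u i ≠ v i) := by
      ext i; simp [ne_comm]
    rw [he]; exact h3⟩
  loopless := ⟨fun u h => h.1 rfl⟩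

/-- The independence number `α(H)` of a graph `H` on a finite vertex set: the maximum
size of a stable (independent) set of vertices. -/
noncomputable def indepNum {α : Type*} [Fintype α] (H : SimpleGraph α) : ℕ :=
  sSup {k | ∃ s : Finset α, (s : Set α).Pairwise (fun a b => ¬H.Adj a b) ∧ s.card = k}

/-- The `γ`-fractional capacity `Θ_γ(G) = sup_{r ≥ 1/γ} α(G(r, ⌊γr⌋))^{1/r}`.
For `γ = 1` this is the (full) Shannon capacity `Θ(G)`. -/
noncomputable def fracCap {V : Type*} [Fintype V] [DecidableEq V]
    (γ : ℝ) (G : SimpleGraph V) : ℝ :=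
  sSup {x : ℝ | ∃ r : ℕ, 1 ≤ γ * r ∧
    x = (indepNum (strongPow G r ⌊γ * r⌋₊) : ℝ) ^ ((r : ℝ)⁻¹)}

open Finset

theorem two_rpow_binH {γ : ℝ} (h0 : 0 < γ) (h1 : γ < 1) :
    (2 : ℝ) ^ binH γ = γ ^ (-γ) * (1 - γ) ^ (-(1 - γ)) := by
  have hq : 0 < 1 - γ := by linarith
  have h : binH γ = Real.logb 2 γ * (-γ) + Real.logb 2 (1 - γ) * (-(1 - γ)) := by
    unfold binH; ring
  rw [h, Real.rpow_add two_pos, Real.rpow_mul two_pos.le, Real.rpow_mul two_pos.le,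
    Real.rpow_logb two_pos (by norm_num) h0, Real.rpow_logb two_pos (by norm_num) hq]

theorem sum_pow_card_le_two_rpow_binH {ι : Type*} [Fintype ι] {γ x : ℝ} {k : ℕ}
    (hγ : 0 < γ) (hx : 0 < x) (hγx : γ ≤ (1 - γ) * x) (hk : (k : ℝ) ≤ γ * Fintype.card ι) :
    ∑ S : Finset ι with #S ≤ k, x ^ #S ≤ ((2 : ℝ) ^ binH γ * x ^ γ) ^ Fintype.card ι := by
  set r := Fintype.card ι
  set q := 1 - γ
  have hq : 0 < q := pos_of_mul_pos_left (hγ.trans_le hγx) hx.le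
  -- exponential tilting: `θ ^ (#S - γ r) ≥ 1` on the range of summation
  set θ := γ / (q * x) with hθ_def
  have hθ0 : 0 < θ := by positivity
  have hθ1 : θ ≤ 1 := (div_le_one (by positivity)).2 hγx
  have hxθ : x * θ = γ / q := by rw [hθ_def]; field_simp
  have hterm : ∀ S : Finset ι, #S ≤ k → x ^ #S ≤ (γ / q) ^ #S * θ ^ (-(γ * r)) := by
    intro S hS
    have h1 : 1 ≤ θ ^ ((#S : ℝ) - γ * r) :=
      Real.one_le_rpow_of_pos_of_le_one_of_nonpos hθ0 hθ1
        (by have : (#S : ℝ) ≤ k := by exact_mod_cast hS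
            linarith)
    calc x ^ #S ≤ x ^ #S * θ ^ ((#S : ℝ) - γ * r) := le_mul_of_one_le_right (by positivity) h1
      _ = (γ / q) ^ #S * θ ^ (-(γ * r)) := by
        rw [sub_eq_add_neg, Real.rpow_add hθ0, Real.rpow_natCast, ← mul_assoc, ← mul_pow, hxθ]
  have hbinom : ∑ S : Finset ι, (γ / q) ^ #S = q⁻¹ ^ r := by
    have := Fintype.sum_pow_mul_eq_add_pow ι (γ / q) 1
    simp only [one_pow, mul_one] at this
    rw [this]
    congr 1
    field_simp
    ring
  have hbase : q⁻¹ * θ ^ (-γ) = (2 : ℝ) ^ binH γ * x ^ γ := by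
    rw [two_rpow_binH hγ (by linarith), hθ_def, Real.div_rpow hγ.le (by positivity),
      Real.mul_rpow hq.le hx.le, neg_sub, Real.rpow_sub_one hq.ne', Real.rpow_neg hq.le,
      Real.rpow_neg hx.le]
    field_simp
  calc ∑ S : Finset ι with #S ≤ k, x ^ #S
      ≤ ∑ S : Finset ι with #S ≤ k, (γ / q) ^ #S * θ ^ (-(γ * r)) :=
        sum_le_sum fun S hS => hterm S (mem_filter.1 hS).2
    _ ≤ ∑ S : Finset ι, (γ / q) ^ #S * θ ^ (-(γ * r)) :=
        sum_le_sum_of_subset_of_nonneg (filter_subset _ _) fun _ _ _ => by positivity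
    _ = (q⁻¹ * θ ^ (-γ)) ^ r := by
        rw [← sum_mul, hbinom, mul_pow, ← neg_mul, Real.rpow_mul_natCast hθ0.le]
    _ = _ := by rw [hbase]

theorem indepNum_eq_indepNum {α : Type*} [Fintype α] (H : SimpleGraph α) :
    indepNum H = H.indepNum := by
  simp only [indepNum, SimpleGraph.indepNum, SimpleGraph.isNIndepSet_iff]

theorem indepNum_le_card {α : Type*} [Fintype α] (H : SimpleGraph α) :
    indepNum H ≤ Fintype.card α := by
  obtain ⟨s, -, hs⟩ := H.exists_isNIndepSet_indepNum
  rw [indepNum_eq_indepNum, ← hs]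
  exact card_le_univ s

theorem exists_isIndepSet_sum_inv_le {α : Type*} [DecidableEq α] (H : SimpleGraph α)
    [DecidableRel H.Adj] (s : Finset α) :
    ∃ t ⊆ s, H.IsIndepSet t ∧ ∑ v ∈ s, ((#{w ∈ s | H.Adj v w} : ℝ) + 1)⁻¹ ≤ #t := by
  induction s using Finset.strongInduction with
  | _ s ih =>
  obtain rfl | hne := s.eq_empty_or_nonempty
  · exact ⟨∅, empty_subset _, by simp, by simp⟩
  -- a vertex of minimum degree: its closed neighbourhood contributes at most `1` to the sum
  obtain ⟨v, hv, hmin⟩ := s.exists_min_image (fun v => #{w ∈ s | H.Adj v w}) hne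
  set N := insert v {w ∈ s | H.Adj v w}
  have hNs : N ⊆ s := insert_subset hv (filter_subset _ _)
  obtain ⟨t, hts, ht, hsum⟩ := ih (s \ N) (sdiff_ssubset hNs (insert_nonempty _ _))
  have hvt : v ∉ t := fun h => (mem_sdiff.1 (hts h)).2 (mem_insert_self v _)
  refine ⟨insert v t, insert_subset hv (hts.trans sdiff_subset), ?_, ?_⟩
  · rw [coe_insert]
    refine ht.insert fun w hw _ => ?_
    have hvw : ¬H.Adj v w := fun h =>
      (mem_sdiff.1 (hts hw)).2 (mem_insert_of_mem (mem_filter.2 ⟨(mem_sdiff.1 (hts hw)).1, h⟩))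
    exact ⟨hvw, fun h => hvw h.symm⟩
  have hN : ∑ w ∈ N, ((#{u ∈ s | H.Adj w u} : ℝ) + 1)⁻¹ ≤ 1 := by
    calc ∑ w ∈ N, ((#{u ∈ s | H.Adj w u} : ℝ) + 1)⁻¹
        ≤ ∑ _w ∈ N, ((#{u ∈ s | H.Adj v u} : ℝ) + 1)⁻¹ :=
          sum_le_sum fun w hw => by gcongr (?_ + 1)⁻¹; exact_mod_cast hmin w (hNs hw)
      _ = 1 := by
          rw [sum_const, card_insert_of_notMem (by simp), nsmul_eq_mul]
          push_cast
          exact mul_inv_cancel₀ (by positivity)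
  have hrest : ∑ w ∈ s \ N, ((#{u ∈ s | H.Adj w u} : ℝ) + 1)⁻¹
      ≤ ∑ w ∈ s \ N, ((#{u ∈ s \ N | H.Adj w u} : ℝ) + 1)⁻¹ :=
    sum_le_sum fun w _ => by
      gcongr (?_ + 1)⁻¹
      exact_mod_cast card_le_card (filter_subset_filter _ sdiff_subset)
  rw [← sum_sdiff hNs, card_insert_of_notMem hvt]
  push_cast
  linarith

theorem sum_inv_degree_add_one_le_indepNum {α : Type*} [Fintype α] [DecidableEq α]
    (H : SimpleGraph α) [DecidableRel H.Adj] :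
    ∑ v, ((H.degree v : ℝ) + 1)⁻¹ ≤ indepNum H := by
  obtain ⟨t, -, ht, hsum⟩ := exists_isIndepSet_sum_inv_le H univ
  simp only [← H.neighborFinset_eq_filter, SimpleGraph.card_neighborFinset_eq_degree] at hsum
  rw [indepNum_eq_indepNum]
  exact hsum.trans (by exact_mod_cast ht.card_le_indepNum)

theorem card_sq_div_le_indepNum {α : Type*} [Fintype α] [DecidableEq α]
    (H : SimpleGraph α) [DecidableRel H.Adj] :
    (Fintype.card α : ℝ) ^ 2 / ∑ v, ((H.degree v : ℝ) + 1) ≤ indepNum H := by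
  refine le_trans ?_ (sum_inv_degree_add_one_le_indepNum H)
  simpa using sq_sum_div_le_sum_sq_div univ (fun _ => (1 : ℝ))
    (g := fun v => (H.degree v : ℝ) + 1) fun v _ => by positivity

instance strongPow.instDecidableRel {V : Type*} [DecidableEq V] (G : SimpleGraph V)
    [DecidableRel G.Adj] (r k : ℕ) : DecidableRel (strongPow G r k).Adj := fun u v =>
  inferInstanceAs (Decidable (u ≠ v ∧ (∀ i, u i = v i ∨ G.Adj (u i) (v i)) ∧
    #{i | u i ≠ v i} ≤ k))

section StrongPow

variable {V : Type*} [Fintype V] (G : SimpleGraph V)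

theorem strongPow_degree_add_one_le [DecidableEq V] [DecidableRel G.Adj] (r k : ℕ)
    (u : Fin r → V) :
    (strongPow G r k).degree u + 1 ≤
      ∑ S : Finset (Fin r) with #S ≤ k, ∏ i, if i ∈ S then G.degree (u i) else 1 := by
  have hcover : insert u ((strongPow G r k).neighborFinset u) ⊆
      ({S : Finset (Fin r) | #S ≤ k} : Finset _).biUnion fun S =>
        Fintype.piFinset fun i => if i ∈ S then G.neighborFinset (u i) else {u i} := by
    intro v hv
    refine mem_biUnion.2
      ⟨({i | u i ≠ v i} : Finset (Fin r)), ?_, Fintype.mem_piFinset.2 fun i => ?_⟩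
    · rcases mem_insert.1 hv with rfl | hv
      · simp
      · exact mem_filter.2 ⟨mem_univ _, ((strongPow G r k).mem_neighborFinset u v).1 hv |>.2.2⟩
    · by_cases h : u i = v i
      · simp [h]
      · rcases mem_insert.1 hv with rfl | hv
        · exact absurd rfl h
        have hadj := (((strongPow G r k).mem_neighborFinset u v).1 hv).2.1 i
        simp [h, hadj.resolve_left h]
  calc (strongPow G r k).degree u + 1
      = #(insert u ((strongPow G r k).neighborFinset u)) := by
        rw [card_insert_of_notMem (by simp), SimpleGraph.card_neighborFinset_eq_degree]
    _ ≤ _ := (card_le_card hcover).trans card_biUnion_le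
    _ = _ := by
        refine sum_congr rfl fun S _ => ?_
        rw [Fintype.card_piFinset]
        exact prod_congr rfl fun i _ => by split_ifs <;> simp

theorem sum_prod_ite_degree [DecidableRel G.Adj] (r : ℕ) (S : Finset (Fin r)) :
    ∑ u : Fin r → V, ∏ i, (if i ∈ S then G.degree (u i) else 1) =
      (∑ v, G.degree v) ^ #S * Fintype.card V ^ (r - #S) := by
  rw [← Fintype.prod_sum fun i v => if i ∈ S then G.degree v else 1]
  simp [prod_ite, filter_not, card_univ_sdiff]

theorem sum_degree_add_one_strongPow_le [DecidableEq V] [DecidableRel G.Adj] (r k : ℕ) :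
    ∑ u, ((strongPow G r k).degree u + 1) ≤
      ∑ S : Finset (Fin r) with #S ≤ k, (∑ v, G.degree v) ^ #S * Fintype.card V ^ (r - #S) :=
  calc ∑ u, ((strongPow G r k).degree u + 1)
      ≤ ∑ u : Fin r → V, ∑ S : Finset (Fin r) with #S ≤ k,
          ∏ i, if i ∈ S then G.degree (u i) else 1 :=
        sum_le_sum fun u _ => strongPow_degree_add_one_le G r k u
    _ = _ := by rw [sum_comm]; exact sum_congr rfl fun S _ => sum_prod_ite_degree G r S

theorem indepNum_pow_le_indepNum_strongPow [DecidableEq V] (r k : ℕ) :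
    indepNum G ^ r ≤ indepNum (strongPow G r k) := by
  obtain ⟨s, hs, hcard⟩ := G.exists_isNIndepSet_indepNum
  rw [indepNum_eq_indepNum, indepNum_eq_indepNum, ← hcard, ← Fintype.card_piFinset_const]
  refine SimpleGraph.IsIndepSet.card_le_indepNum fun u hu v hv huv ⟨_, hadj, _⟩ => huv ?_
  funext i
  exact (hadj i).resolve_right fun h => hs (Fintype.mem_piFinset.1 hu i)
    (Fintype.mem_piFinset.1 hv i) (G.ne_of_adj h) h

end StrongPow

theorem le_fracCap_of_forall_pow_le {V : Type*} [Fintype V] [DecidableEq V] (G : SimpleGraph V)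
    {γ L : ℝ} (hγ : 0 < γ) (hL : 0 ≤ L)
    (h : ∀ r : ℕ, L ^ r ≤ indepNum (strongPow G r ⌊γ * r⌋₊)) : L ≤ fracCap γ G := by
  obtain ⟨r, hr⟩ := exists_nat_ge γ⁻¹
  have hγr : 1 ≤ γ * r := by rwa [← div_le_iff₀' hγ, one_div]
  have hr0 : r ≠ 0 := by rintro rfl; norm_num at hγr
  have hbdd : BddAbove {x : ℝ | ∃ r : ℕ, 1 ≤ γ * r ∧
      x = (indepNum (strongPow G r ⌊γ * r⌋₊) : ℝ) ^ ((r : ℝ)⁻¹)} := by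
    refine ⟨Fintype.card V, ?_⟩
    rintro x ⟨r, hr, rfl⟩
    have hr0 : r ≠ 0 := by rintro rfl; norm_num at hr
    have hle : (indepNum (strongPow G r ⌊γ * r⌋₊) : ℝ) ≤ (Fintype.card V : ℝ) ^ r := by
      exact_mod_cast (indepNum_le_card _).trans_eq (by simp)
    calc (indepNum (strongPow G r ⌊γ * r⌋₊) : ℝ) ^ ((r : ℝ)⁻¹)
        ≤ ((Fintype.card V : ℝ) ^ r) ^ ((r : ℝ)⁻¹) := by gcongr
      _ = Fintype.card V := Real.pow_rpow_inv_natCast (Nat.cast_nonneg _) hr0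
  calc L = (L ^ r) ^ ((r : ℝ)⁻¹) := (Real.pow_rpow_inv_natCast hL hr0).symm
    _ ≤ (indepNum (strongPow G r ⌊γ * r⌋₊) : ℝ) ^ ((r : ℝ)⁻¹) := by gcongr; exact h r
    _ ≤ fracCap γ G := le_csSup hbdd ⟨r, hγr, rfl⟩

section AvgDegree

variable {V : Type*} [Fintype V] (G : SimpleGraph V) [DecidableRel G.Adj]

noncomputable def avgDegree : ℝ :=
  (∑ v, (G.degree v : ℝ)) / Fintype.card V

theorem avgDegree_nonneg : 0 ≤ avgDegree G := by
  unfold avgDegree; positivity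

theorem sum_degree_eq_avgDegree_mul_card (hV : Fintype.card V ≠ 0) :
    ∑ v, (G.degree v : ℝ) = avgDegree G * Fintype.card V := by
  rw [avgDegree, div_mul_cancel₀ _ (by exact_mod_cast hV)]

theorem card_div_avgDegree_add_one_le_indepNum [DecidableEq V] :
    (Fintype.card V : ℝ) / (avgDegree G + 1) ≤ indepNum G := by
  rcases eq_or_ne (Fintype.card V) 0 with hV | hV
  · simp [hV]
  calc (Fintype.card V : ℝ) / (avgDegree G + 1)
      = (Fintype.card V : ℝ) ^ 2 / ∑ v, ((G.degree v : ℝ) + 1) := by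
        rw [sum_add_distrib, sum_degree_eq_avgDegree_mul_card G hV, sum_const, card_univ,
          nsmul_eq_mul, mul_one]
        field_simp
    _ ≤ indepNum G := card_sq_div_le_indepNum G

theorem pow_le_indepNum_strongPow [DecidableEq V] {γ : ℝ} (hγ : 0 < γ)
    (hγd : γ ≤ avgDegree G / (avgDegree G + 1)) (r : ℕ) :
    ((Fintype.card V : ℝ) / (2 ^ binH γ * avgDegree G ^ γ)) ^ r ≤
      indepNum (strongPow G r ⌊γ * r⌋₊) := by
  set d := avgDegree G
  have hd1 : 0 < d + 1 := by linarith [avgDegree_nonneg G]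
  have hd : 0 < d := by
    have := hγ.trans_le hγd
    rwa [div_pos_iff_of_pos_right hd1] at this
  have hγd' : γ ≤ (1 - γ) * d := by
    rw [le_div_iff₀ hd1] at hγd; linarith
  have hV : Fintype.card V ≠ 0 := by
    rintro hV; simp [d, avgDegree, hV] at hd
  set k := ⌊γ * r⌋₊
  have hk : (k : ℝ) ≤ γ * Fintype.card (Fin r) := by
    rw [Fintype.card_fin]; exact Nat.floor_le (by positivity)
  have hsum : ∑ u, (((strongPow G r k).degree u : ℝ) + 1) ≤
      (Fintype.card V : ℝ) ^ r * (2 ^ binH γ * d ^ γ) ^ r :=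
    calc ∑ u, (((strongPow G r k).degree u : ℝ) + 1)
        ≤ ∑ S : Finset (Fin r) with #S ≤ k,
            (∑ v, (G.degree v : ℝ)) ^ #S * (Fintype.card V : ℝ) ^ (r - #S) := by
          exact_mod_cast sum_degree_add_one_strongPow_le G r k
      _ = (Fintype.card V : ℝ) ^ r * ∑ S : Finset (Fin r) with #S ≤ k, d ^ #S := by
          rw [mul_sum, sum_degree_eq_avgDegree_mul_card G hV]
          refine sum_congr rfl fun S _ => ?_
          rw [mul_pow, mul_assoc,
            pow_mul_pow_sub _ ((card_le_univ S).trans_eq (Fintype.card_fin r)), mul_comm]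
      _ ≤ (Fintype.card V : ℝ) ^ r * (2 ^ binH γ * d ^ γ) ^ r := by
          gcongr
          simpa using sum_pow_card_le_two_rpow_binH hγ hd hγd' hk
  calc ((Fintype.card V : ℝ) / (2 ^ binH γ * d ^ γ)) ^ r
      = ((Fintype.card V : ℝ) ^ r) ^ 2 /
          ((Fintype.card V : ℝ) ^ r * (2 ^ binH γ * d ^ γ) ^ r) := by
        rw [div_pow]; field_simp
    _ ≤ (Fintype.card (Fin r → V) : ℝ) ^ 2 / ∑ u, (((strongPow G r k).degree u : ℝ) + 1) := by
        have : Nonempty V := Fintype.card_pos_iff.1 (Nat.pos_of_ne_zero hV)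
        rw [Fintype.card_fun, Fintype.card_fin, Nat.cast_pow]
        gcongr
    _ ≤ indepNum (strongPow G r k) := card_sq_div_le_indepNum _

end AvgDegree

theorem fracCap_lower_bound_avgDegree_general {V : Type*} [Fintype V] [DecidableEq V]
    (G : SimpleGraph V) [DecidableRel G.Adj]
    (γ : ℝ) (hγ0 : 0 < γ) :
    (γ < ((∑ v : V, (G.degree v : ℝ)) / (Fintype.card V : ℝ)) /
        ((∑ v : V, (G.degree v : ℝ)) / (Fintype.card V : ℝ) + 1) →
      (Fintype.card V : ℝ) /
          ((2 : ℝ) ^ binH γ *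
            ((∑ v : V, (G.degree v : ℝ)) / (Fintype.card V : ℝ)) ^ γ)
        ≤ fracCap γ G) ∧
    (((∑ v : V, (G.degree v : ℝ)) / (Fintype.card V : ℝ)) /
        ((∑ v : V, (G.degree v : ℝ)) / (Fintype.card V : ℝ) + 1) ≤ γ →
      (Fintype.card V : ℝ) /
          ((∑ v : V, (G.degree v : ℝ)) / (Fintype.card V : ℝ) + 1)
        ≤ fracCap γ G) := by
  rw [show (∑ v : V, (G.degree v : ℝ)) / (Fintype.card V : ℝ) = avgDegree G from rfl]
  have hd1 : 0 < avgDegree G + 1 := by linarith [avgDegree_nonneg G]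
  refine ⟨fun hγd => ?_, fun _ => ?_⟩
  · have hL : 0 ≤ (Fintype.card V : ℝ) / (2 ^ binH γ * avgDegree G ^ γ) := by
      have := avgDegree_nonneg G
      positivity
    exact le_fracCap_of_forall_pow_le G hγ0 hL (pow_le_indepNum_strongPow G hγ0 hγd.le)
  · refine le_fracCap_of_forall_pow_le G hγ0 (by positivity) fun r => ?_
    calc ((Fintype.card V : ℝ) / (avgDegree G + 1)) ^ r
        ≤ (indepNum G : ℝ) ^ r := by gcongr; exact card_div_avgDegree_add_one_le_indepNum G
      _ ≤ indepNum (strongPow G r ⌊γ * r⌋₊) := by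
        exact_mod_cast indepNum_pow_le_indepNum_strongPow G r _

/-- Lower bound via the average degree `d_av`: if `0 < γ < d_av/(d_av+1)` then
`Θ_γ(G) ≥ n / (2^{H(γ)} d_av^γ)`, and if `d_av/(d_av+1) ≤ γ ≤ 1` then
`Θ_γ(G) ≥ n/(d_av+1)`. -/
theorem fracCap_lower_bound_avgDegree {V : Type*} [Fintype V] [DecidableEq V]
    (G : SimpleGraph V) [DecidableRel G.Adj]
    (hconn : G.Connected) (hn : 3 ≤ Fintype.card V)
    (γ : ℝ) (hγ0 : 0 < γ) (hγ1 : γ ≤ 1) :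
    (γ < ((∑ v : V, (G.degree v : ℝ)) / (Fintype.card V : ℝ)) /
        ((∑ v : V, (G.degree v : ℝ)) / (Fintype.card V : ℝ) + 1) →
      (Fintype.card V : ℝ) /
          ((2 : ℝ) ^ binH γ *
            ((∑ v : V, (G.degree v : ℝ)) / (Fintype.card V : ℝ)) ^ γ)
        ≤ fracCap γ G) ∧
    (((∑ v : V, (G.degree v : ℝ)) / (Fintype.card V : ℝ)) /
        ((∑ v : V, (G.degree v : ℝ)) / (Fintype.card V : ℝ) + 1) ≤ γ →
      (Fintype.card V : ℝ) /
          ((∑ v : V, (G.degree v : ℝ)) / (Fintype.card V : ℝ) + 1)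
        ≤ fracCap γ G) :=
  fracCap_lower_bound_avgDegree_general G γ hγ0
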